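/- With X, T, (τ_n)_n, X_τ̄ as in the context: the generalized subshift (X_τ̄, σ) is a minimal aperiodic Cantor ℤ-system; in particular X_τ̄ is a nonempty Cantor set, the shift σ restricted to X_τ̄ is minimal, and σ restricted to X_τ̄ has no periodic points. -/

import Mathlib

open TopologicalSpace

/-- The group of self-homeomorphisms of a space, with `(f * g) x = f (g x)`. -/
instance homeoGroup {X : Type*} [TopologicalSpace X] : Group (X ≃ₜ X) where
  mul f g := g.trans f
  one := Homeomorph.refl X
  inv := Homeomorph.symm
  mul_assoc _ _ _ := Homeomorph.ext fun _ => rfl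
  one_mul _ := Homeomorph.ext fun _ => rfl
  mul_one _ := Homeomorph.ext fun _ => rfl
  inv_mul_cancel f := Homeomorph.ext fun x => f.symm_apply_apply x

variable {X : Type*} [TopologicalSpace X] {Γ : Type*} [Group Γ]

/-- The word `τ_n(x) = T^{s_1}(x) ⋯ T^{s_{d_n}}(x)` of the generalized substitution `τ_n`,
where `S_n = {s 0, …, s (d n - 1)}` (0-indexed) and `s 0 = 1`. -/
def tauWord (T : Γ →* (X ≃ₜ X)) (s : ℕ → Γ) (d : ℕ → ℕ) (n : ℕ) (x : X) : List X :=
  List.ofFn fun i : Fin (d n) => T (s i.val) x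

/-- The word `τ_i ∘ τ_{i+1} ∘ ⋯ ∘ τ_{i+k}(a)`, where each substitution is extended to words
by concatenation. -/
def tauComp (T : Γ →* (X ≃ₜ X)) (s : ℕ → Γ) (d : ℕ → ℕ) : ℕ → ℕ → X → List X
  | i, 0, a => tauWord T s d i a
  | i, k + 1, a => (tauComp T s d (i + 1) k a).flatMap (tauWord T s d i)

/-- The set of words of length `ℓ` (as functions `Fin ℓ → X`) occurring as subwords of some
`τ_0 ∘ ⋯ ∘ τ_j (a)`. -/
def subwordSet (T : Γ →* (X ≃ₜ X)) (s : ℕ → Γ) (d : ℕ → ℕ) (a : X) (ℓ : ℕ) :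
    Set (Fin ℓ → X) :=
  {v | ∃ j off : ℕ, ∀ m : Fin ℓ, (tauComp T s d 0 j a)[off + m.val]? = some (v m)}

/-- The language `L(τ̄,a)` in each length `ℓ`: subwords of the `τ_0 ∘ ⋯ ∘ τ_j(a)` together
with all their limits, i.e. the closure of `subwordSet` in `X^ℓ`. -/
def lang (T : Γ →* (X ≃ₜ X)) (s : ℕ → Γ) (d : ℕ → ℕ) (a : X) (ℓ : ℕ) : Set (Fin ℓ → X) :=
  closure (subwordSet T s d a ℓ)

section Base

lemma homeo_mul_apply {f g : X ≃ₜ X} (x : X) : (f * g) x = f (g x) := rfl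

lemma T_mul_apply (T : Γ →* (X ≃ₜ X)) (g h : Γ) (x : X) : T (g * h) x = T g (T h x) := by
  rw [map_mul]; rfl

/-- mixed-radix length -/
def Lam (d : ℕ → ℕ) : ℕ → ℕ → ℕ
  | i, 0 => d i
  | i, k + 1 => d i * Lam d (i + 1) k

/-- the group element at position `r` of `tauComp i k` -/
def hcoef (s : ℕ → Γ) (d : ℕ → ℕ) : ℕ → ℕ → ℕ → Γ
  | i, 0, r => s r
  | i, k + 1, r => s (r % d i) * hcoef s d (i + 1) k (r / d i)

variable (T : Γ →* (X ≃ₜ X)) (s : ℕ → Γ) (d : ℕ → ℕ)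

lemma Lam_pos (hd : ∀ n, 1 ≤ d n) (i k : ℕ) : 0 < Lam d i k := by
  induction k generalizing i with
  | zero => exact hd i
  | succ k ih => exact Nat.mul_pos (hd i) (ih (i + 1))

lemma length_tauWord (n : ℕ) (x : X) : (tauWord T s d n x).length = d n := by
  simp [tauWord]

lemma length_tauComp (i k : ℕ) (a : X) : (tauComp T s d i k a).length = Lam d i k := by
  induction k generalizing i a with
  | zero => simp [tauComp, Lam, length_tauWord]
  | succ k ih =>
    simp only [tauComp, List.length_flatMap, Lam]
    have h1 : List.map (fun a => (tauWord T s d i a).length) (tauComp T s d (i+1) k a)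
        = List.map (fun _ => d i) (tauComp T s d (i+1) k a) :=
      List.map_congr_left (fun x _ => by simp [Function.comp, length_tauWord])
    rw [h1, List.map_const', List.sum_replicate, smul_eq_mul, ih, mul_comm]

lemma getElem?_tauWord (n : ℕ) (x : X) (r : ℕ) :
    (tauWord T s d n x)[r]? = if r < d n then some (T (s r) x) else none := by
  simp only [tauWord, List.getElem?_ofFn, List.ofFnNthVal]
  split <;> rfl

lemma flatMap_getElem? {α β : Type*} (f : α → List β) (c : ℕ) (hc : 0 < c)
    (l : List α) (h : ∀ x ∈ l, (f x).length = c) (m : ℕ) :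
    (l.flatMap f)[m]? = l[m / c]?.bind fun x => (f x)[m % c]? := by
  induction l generalizing m with
  | nil => simp
  | cons x l ih =>
    have hx : (f x).length = c := h x List.mem_cons_self
    rw [List.flatMap_cons]
    rcases lt_or_ge m c with hm | hm
    · rw [List.getElem?_append_left (by omega), Nat.div_eq_of_lt hm,
        Nat.mod_eq_of_lt hm]
      simp
    · obtain ⟨t, rfl⟩ : ∃ t, m = t + c := ⟨m - c, by omega⟩
      rw [List.getElem?_append_right (by omega), hx, Nat.add_sub_cancel,
        Nat.add_div_right t hc, Nat.add_mod_right t c,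
        ih (fun z hz => h z (List.mem_cons_of_mem x hz)) t]
      simp

lemma getElem?_tauComp (hd : ∀ n, 1 ≤ d n) (i k : ℕ) (a : X) (r : ℕ) :
    (tauComp T s d i k a)[r]? =
      if r < Lam d i k then some (T (hcoef s d i k r) a) else none := by
  induction k generalizing i r with
  | zero => exact getElem?_tauWord T s d i a r
  | succ k ih =>
    rw [show tauComp T s d i (k+1) a = (tauComp T s d (i+1) k a).flatMap (tauWord T s d i)
        from rfl,
      flatMap_getElem? (tauWord T s d i) (d i) (hd i) _
        (fun x _ => length_tauWord T s d i x) r, ih]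
    rcases lt_or_ge r (Lam d i (k+1)) with hr | hr
    · have h1 : r / d i < Lam d (i+1) k := by
        rw [Nat.div_lt_iff_lt_mul (hd i)]
        calc r < Lam d i (k+1) := hr
        _ = Lam d (i+1) k * d i := by rw [Lam, mul_comm]
      rw [if_pos h1, if_pos hr, Option.bind_some, getElem?_tauWord,
        if_pos (Nat.mod_lt r (hd i))]
      rw [hcoef, T_mul_apply]
    · have h1 : ¬ r / d i < Lam d (i+1) k := by
        rw [not_lt, Nat.le_div_iff_mul_le (hd i)]
        calc Lam d (i+1) k * d i = Lam d i (k+1) := by rw [Lam, mul_comm]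
        _ ≤ r := hr
      rw [if_neg h1, if_neg (not_lt.2 hr), Option.bind_none]

lemma hcoef_zero (hs1 : s 0 = 1) (hd : ∀ n, 1 ≤ d n) (i k : ℕ) :
    hcoef s d i k 0 = (1 : Γ) := by
  induction k generalizing i with
  | zero => simpa [hcoef] using hs1
  | succ k ih => simp [hcoef, Nat.zero_mod, Nat.zero_div, hs1, ih]

/-- `tauComp i (k+1+k') a` decomposes into level-`k` blocks. -/
lemma tauComp_decomp (i k k' : ℕ) (a : X) :
    tauComp T s d i (k + 1 + k') a =
      (tauComp T s d (i + k + 1) k' a).flatMap (tauComp T s d i k) := by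
  induction k generalizing i with
  | zero =>
    have e1 : 0 + 1 + k' = k' + 1 := by omega
    have e2 : i + 0 + 1 = i + 1 := by omega
    rw [e1, e2]
    rfl
  | succ k ih =>
    have e1 : k + 1 + 1 + k' = (k + 1 + k') + 1 := by omega
    have e2 : i + (k + 1) + 1 = (i + 1) + k + 1 := by omega
    rw [e1, e2]
    show (tauComp T s d (i+1) (k + 1 + k') a).flatMap (tauWord T s d i) = _
    rw [ih (i+1), List.flatMap_assoc]
    rfl

lemma Lam_le_succ (hd : ∀ n, 1 ≤ d n) (i k : ℕ) : Lam d i k ≤ Lam d i (k + 1) := by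
  induction k generalizing i with
  | zero =>
    show d i ≤ d i * Lam d (i+1) 0
    exact Nat.le_mul_of_pos_right _ (Lam_pos d hd (i+1) 0)
  | succ k ih => exact Nat.mul_le_mul_left _ (ih (i+1))

lemma Lam_mono (hd : ∀ n, 1 ≤ d n) (i : ℕ) : Monotone (Lam d i) :=
  monotone_nat_of_le_succ (Lam_le_succ d hd i)

lemma Lam_lower (hd2 : ∀ n, 2 ≤ d n) (i k : ℕ) : k + 2 ≤ Lam d i k := by
  induction k generalizing i with
  | zero => exact hd2 i
  | succ k ih =>
    calc k + 3 ≤ 2 * (k + 2) := by omega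
    _ ≤ d i * Lam d (i+1) k := Nat.mul_le_mul (hd2 i) (ih (i+1))
    _ = Lam d i (k+1) := rfl

lemma Lam_add (i k k' : ℕ) : Lam d i (k + 1 + k') = Lam d i k * Lam d (i + k + 1) k' := by
  induction k generalizing i with
  | zero =>
    have e1 : 0 + 1 + k' = k' + 1 := by omega
    have e2 : i + 0 + 1 = i + 1 := by omega
    rw [e1, e2]
    rfl
  | succ k ih =>
    have e1 : k + 1 + 1 + k' = (k + 1 + k') + 1 := by omega
    have e2 : i + (k + 1) + 1 = (i + 1) + k + 1 := by omega
    rw [e1, e2]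
    show d i * Lam d (i+1) (k + 1 + k') = (d i * Lam d (i+1) k) * Lam d ((i+1) + k + 1) k'
    rw [ih (i+1), mul_assoc]

end Base

section Prod

variable {Γ : Type*} [Group Γ] (s : ℕ → Γ) (d : ℕ → ℕ)

/-- `g` is a product `s q_i * s q_{i+1} * ⋯ * s q_{i+k}` with `q_{i+j} < d (i+j)`. -/
def IsProd (s : ℕ → Γ) (d : ℕ → ℕ) : ℕ → ℕ → Γ → Prop
  | i, 0, g => ∃ q < d i, s q = g
  | i, k + 1, g => ∃ q < d i, ∃ h, IsProd s d (i + 1) k h ∧ g = s q * h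

lemma isProd_one (hs1 : s 0 = 1) (hd : ∀ n, 1 ≤ d n) (i k : ℕ) : IsProd s d i k 1 := by
  induction k generalizing i with
  | zero => exact ⟨0, hd i, hs1⟩
  | succ k ih => exact ⟨0, hd i, 1, ih (i + 1), by rw [hs1, one_mul]⟩

lemma isProd_hcoef (hd : ∀ n, 1 ≤ d n) (i k r : ℕ) (hr : r < Lam d i k) :
    IsProd s d i k (hcoef s d i k r) := by
  induction k generalizing i r with
  | zero => exact ⟨r, hr, rfl⟩
  | succ k ih =>
    refine ⟨r % d i, Nat.mod_lt r (hd i), hcoef s d (i+1) k (r / d i), ih (i+1) _ ?_, rfl⟩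
    rw [Nat.div_lt_iff_lt_mul (hd i), mul_comm]
    exact hr

lemma isProd_exists_hcoef (hd : ∀ n, 1 ≤ d n) (i k : ℕ) (g : Γ) (h : IsProd s d i k g) :
    ∃ r < Lam d i k, hcoef s d i k r = g := by
  induction k generalizing i g with
  | zero => exact h
  | succ k ih =>
    obtain ⟨q, hq, h', hh', rfl⟩ := h
    obtain ⟨r', hr', hc⟩ := ih (i+1) h' hh'
    refine ⟨q + d i * r', ?_, ?_⟩
    · show q + d i * r' < d i * Lam d (i+1) k
      calc q + d i * r' < d i + d i * r' := by omega
      _ = d i * (r' + 1) := by ring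
      _ ≤ d i * Lam d (i+1) k := Nat.mul_le_mul_left _ (by omega)
    · show s ((q + d i * r') % d i) * hcoef s d (i+1) k ((q + d i * r') / d i) = s q * h'
      rw [Nat.add_mul_mod_self_left, Nat.add_mul_div_left _ _ (hd i),
        Nat.mod_eq_of_lt hq, Nat.div_eq_of_lt hq, Nat.zero_add, hc]

lemma isProd_mono_k (hs1 : s 0 = 1) (hd : ∀ n, 1 ≤ d n) (i k : ℕ) (g : Γ)
    (h : IsProd s d i k g) : IsProd s d i (k + 1) g := by
  induction k generalizing i g with
  | zero =>
    obtain ⟨q, hq, rfl⟩ := h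
    exact ⟨q, hq, 1, ⟨0, hd (i+1), hs1⟩, (mul_one _).symm⟩
  | succ k ih =>
    obtain ⟨q, hq, h', hh', rfl⟩ := h
    exact ⟨q, hq, h', ih (i+1) h' hh', rfl⟩

lemma isProd_mono_k_le (hs1 : s 0 = 1) (hd : ∀ n, 1 ≤ d n) (i : ℕ) {k k' : ℕ} (hk : k ≤ k')
    (g : Γ) (h : IsProd s d i k g) : IsProd s d i k' g := by
  induction k' with
  | zero => rwa [Nat.le_zero.mp hk] at h
  | succ k' ih =>
    rcases Nat.lt_or_ge k (k' + 1) with h1 | h1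
    · exact isProd_mono_k s d hs1 hd i k' g (ih (by omega))
    · rwa [show k = k' + 1 by omega] at h

lemma isProd_mono_i (hdmono : Monotone d) {i i' : ℕ} (hi : i ≤ i') (k : ℕ) (g : Γ)
    (h : IsProd s d i k g) : IsProd s d i' k g := by
  induction k generalizing i i' g with
  | zero => obtain ⟨q, hq, rfl⟩ := h; exact ⟨q, lt_of_lt_of_le hq (hdmono hi), rfl⟩
  | succ k ih =>
    obtain ⟨q, hq, h', hh', rfl⟩ := h
    exact ⟨q, lt_of_lt_of_le hq (hdmono hi), h', ih (show i+1 ≤ i'+1 by omega) h' hh', rfl⟩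

lemma isProd_pad_left (hs1 : s 0 = 1) (hd : ∀ n, 1 ≤ d n) (i k : ℕ) (g : Γ)
    (h : IsProd s d (i + 1) k g) : IsProd s d i (k + 1) g :=
  ⟨0, hd i, g, h, by rw [hs1, one_mul]⟩

lemma isProd_mul (hdmono : Monotone d) (i k k' : ℕ) (g h : Γ)
    (hg : IsProd s d i k g) (hh : IsProd s d (i + k + 1) k' h) :
    IsProd s d i (k + k' + 1) (g * h) := by
  induction k generalizing i g with
  | zero =>
    obtain ⟨q, hq, rfl⟩ := hg
    exact ⟨q, hq, h, by simpa using hh, rfl⟩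
  | succ k ih =>
    obtain ⟨q, hq, g', hg', rfl⟩ := hg
    have hh' : IsProd s d ((i + 1) + k + 1) k' h := by
      rwa [show (i+1) + k + 1 = i + (k+1) + 1 by omega]
    rw [show k + 1 + k' + 1 = (k + k' + 1) + 1 by omega]
    exact ⟨q, hq, g' * h, ih (i + 1) g' hg' hh', (mul_assoc _ _ _)⟩

lemma isProd_inv (hs1 : s 0 = 1) (hd : ∀ n, 1 ≤ d n) (hdmono : Monotone d)
    (hsym : ∀ n, ∀ i < d n, ∃ j < d n, s j = (s i)⁻¹) (i k : ℕ) (g : Γ)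
    (h : IsProd s d i k g) : IsProd s d i (k + (k + 1)) g⁻¹ := by
  induction k generalizing i g with
  | zero =>
    obtain ⟨q, hq, rfl⟩ := h
    obtain ⟨q', hq', hs⟩ := hsym i q hq
    exact isProd_mono_k s d hs1 hd i 0 _ ⟨q', hq', hs⟩
  | succ k ih =>
    obtain ⟨q, hq, h', hh', rfl⟩ := h
    rw [mul_inv_rev]
    obtain ⟨q', hq', hs⟩ := hsym i q hq
    have h1 : IsProd s d (i + 1) (k + (k + 1)) h'⁻¹ := ih (i + 1) h' hh'
    have h2 : IsProd s d i (k + (k + 1) + 1) h'⁻¹ := isProd_pad_left s d hs1 hd _ _ _ h1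
    have h3 : IsProd s d (i + (k + (k+1) + 1) + 1) 0 ((s q)⁻¹) :=
      ⟨q', lt_of_lt_of_le hq' (hdmono (by omega)), hs⟩
    have h4 := isProd_mul s d hdmono i (k + (k+1) + 1) 0 _ _ h2 h3
    rwa [show k + (k+1) + 1 + 0 + 1 = (k+1) + (k+1+1) by omega] at h4

lemma isProd_gen (hs1 : s 0 = 1) (hd : ∀ n, 1 ≤ d n) (hdmono : Monotone d)
    (n q : ℕ) (hq : q < d n) (i : ℕ) : ∃ k, IsProd s d i k (s q) := by
  have key : ∀ j i', n ≤ i' + j → IsProd s d i' j (s q) := by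
    intro j
    induction j with
    | zero =>
      intro i' hi'
      exact ⟨q, lt_of_lt_of_le hq (hdmono (by omega)), rfl⟩
    | succ j ih =>
      intro i' hi'
      exact isProd_pad_left s d hs1 hd i' j _ (ih (i' + 1) (by omega))
  exact ⟨n, key n i (by omega)⟩

/-- every group element is a product, starting at any level -/
lemma isProd_all (hs1 : s 0 = 1) (hd : ∀ n, 1 ≤ d n) (hdmono : Monotone d)
    (hsym : ∀ n, ∀ i < d n, ∃ j < d n, s j = (s i)⁻¹)
    (hgen : Subgroup.closure {g : Γ | ∃ n, ∃ i < d n, s i = g} = ⊤)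
    (i : ℕ) (g : Γ) : ∃ k, IsProd s d i k g := by
  set H : Subgroup Γ :=
    { carrier := {g | ∃ k, IsProd s d i k g}
      one_mem' := ⟨0, isProd_one s d hs1 hd i 0⟩
      mul_mem' := by
        rintro x y ⟨k, hx⟩ ⟨k', hy⟩
        exact ⟨k + k' + 1, isProd_mul s d hdmono i k k' x y hx
          (isProd_mono_i s d hdmono (by omega) k' y hy)⟩
      inv_mem' := by
        rintro x ⟨k, hx⟩
        exact ⟨k + (k + 1), isProd_inv s d hs1 hd hdmono hsym i k x hx⟩ } with hH
  have : Subgroup.closure {g : Γ | ∃ n, ∃ q < d n, s q = g} ≤ H := by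
    rw [Subgroup.closure_le]
    rintro x ⟨n, q, hq, rfl⟩
    exact isProd_gen s d hs1 hd hdmono n q hq i
  rw [hgen] at this
  exact this (Subgroup.mem_top g)

lemma isProd_finset (hs1 : s 0 = 1) (hd : ∀ n, 1 ≤ d n) (hdmono : Monotone d)
    (hsym : ∀ n, ∀ i < d n, ∃ j < d n, s j = (s i)⁻¹)
    (hgen : Subgroup.closure {g : Γ | ∃ n, ∃ i < d n, s i = g} = ⊤)
    (i : ℕ) (F : Finset Γ) : ∃ k, ∀ g ∈ F, IsProd s d i k g := by
  classical
  induction F using Finset.induction_on with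
  | empty => exact ⟨0, by simp⟩
  | insert x F' hx ih =>
    obtain ⟨k1, hk1⟩ := ih
    obtain ⟨k2, hk2⟩ := isProd_all s d hs1 hd hdmono hsym hgen i x
    refine ⟨max k1 k2, ?_⟩
    intro g hg
    rcases Finset.mem_insert.mp hg with rfl | hg
    · exact isProd_mono_k_le s d hs1 hd i (le_max_right _ _) g hk2
    · exact isProd_mono_k_le s d hs1 hd i (le_max_left _ _) g (hk1 g hg)

end Prod

variable (T : Γ →* (X ≃ₜ X)) (s : ℕ → Γ) (d : ℕ → ℕ)

section Occ

lemma subword_occ (hd : ∀ n, 1 ≤ d n) {a : X} {ℓ j off : ℕ} {v : Fin ℓ → X}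
    (h : ∀ m : Fin ℓ, (tauComp T s d 0 j a)[off + m.val]? = some (v m)) (m : Fin ℓ) :
    off + m.val < Lam d 0 j ∧ v m = T (hcoef s d 0 j (off + m.val)) a := by
  have := h m
  rw [getElem?_tauComp T s d hd] at this
  by_cases hlt : off + m.val < Lam d 0 j
  · rw [if_pos hlt] at this
    exact ⟨hlt, (Option.some_injective _ this).symm⟩
  · rw [if_neg hlt] at this
    exact absurd this (by simp)

lemma mem_subwordSet_of (hd : ∀ n, 1 ≤ d n) (a : X) (ℓ j off : ℕ)
    (h : off + ℓ ≤ Lam d 0 j) :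
    (fun m : Fin ℓ => T (hcoef s d 0 j (off + m.val)) a) ∈ subwordSet T s d a ℓ := by
  refine ⟨j, off, fun m => ?_⟩
  rw [getElem?_tauComp T s d hd, if_pos (by omega : off + m.val < Lam d 0 j)]

lemma getElem?_block (hd : ∀ n, 1 ≤ d n) (p k' : ℕ) (a : X) (q r : ℕ)
    (hq : q < Lam d (p+1) k') (hr : r < Lam d 0 p) :
    (tauComp T s d 0 (p+1+k') a)[q * Lam d 0 p + r]? =
      some (T (hcoef s d 0 p r) (T (hcoef s d (p+1) k' q) a)) := by
  have e : (0:ℕ) + p + 1 = p + 1 := by omega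
  have hdec := tauComp_decomp T s d 0 p k' a
  rw [e] at hdec
  rw [hdec, flatMap_getElem? (tauComp T s d 0 p) (Lam d 0 p) (Lam_pos d hd 0 p) _
    (fun x _ => length_tauComp T s d 0 p x)]
  have e1 : (q * Lam d 0 p + r) / Lam d 0 p = q := by
    rw [Nat.add_comm, Nat.add_mul_div_right _ _ (Lam_pos d hd 0 p), Nat.div_eq_of_lt hr,
      Nat.zero_add]
  have e2 : (q * Lam d 0 p + r) % Lam d 0 p = r := by
    rw [Nat.add_comm, Nat.add_mul_mod_self_right, Nat.mod_eq_of_lt hr]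
  rw [e1, e2, getElem?_tauComp T s d hd, if_pos hq, Option.bind_some,
    getElem?_tauComp T s d hd, if_pos hr]

end Occ

section Metric

variable {Y : Type*} [MetricSpace Y] [CompactSpace Y] {Λ : Type*} [Group Λ]
variable (U : Λ →* (Y ≃ₜ Y)) (u : ℕ → Λ) (e : ℕ → ℕ)

lemma unif_family (G : Finset Λ) {ε : ℝ} (hε : 0 < ε) :
    ∃ δ > 0, ∀ g ∈ G, ∀ z w : Y, dist z w < δ → dist (U g z) (U g w) < ε := by
  classical
  induction G using Finset.induction_on with
  | empty => exact ⟨1, one_pos, by simp⟩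
  | insert g G' hgmem ih =>
    obtain ⟨δ1, hδ1, h1⟩ := ih
    have hu : UniformContinuous (U g) :=
      CompactSpace.uniformContinuous_of_continuous (U g).continuous
    rw [Metric.uniformContinuous_iff] at hu
    obtain ⟨δ2, hδ2, h2⟩ := hu ε hε
    refine ⟨min δ1 δ2, lt_min hδ1 hδ2, ?_⟩
    intro g' hg' z w hzw
    rcases Finset.mem_insert.mp hg' with rfl | h
    · exact h2 (lt_of_lt_of_le hzw (min_le_right _ _))
    · exact h1 g' h z w (lt_of_lt_of_le hzw (min_le_left _ _))

lemma unif_min (hmin : ∀ x : Y, Dense (Set.range fun γ : Λ => U γ x)) [Nonempty Y]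
    (a : Y) {δ : ℝ} (hδ : 0 < δ) :
    ∃ F : Finset Λ, ∀ c : Y, ∃ γ ∈ F, dist (U γ c) a < δ := by
  have hcover : (Set.univ : Set Y) ⊆ ⋃ γ : Λ, (fun x => U γ x) ⁻¹' Metric.ball a δ := by
    intro c _
    obtain ⟨x, ⟨γ, rfl⟩, hx⟩ := (hmin c).exists_mem_open Metric.isOpen_ball
      ⟨a, Metric.mem_ball_self hδ⟩
    exact Set.mem_iUnion.2 ⟨γ, hx⟩
  obtain ⟨F, hF⟩ := isCompact_univ.elim_finite_subcover _
    (fun γ : Λ => (Metric.isOpen_ball).preimage (U γ).continuous) hcover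
  refine ⟨F, fun c => ?_⟩
  obtain ⟨V, ⟨γ, rfl⟩, hV⟩ := hF (Set.mem_univ c)
  simp only [Set.mem_iUnion, Set.mem_preimage, Metric.mem_ball] at hV
  obtain ⟨hγF, hγ⟩ := hV
  exact ⟨γ, hγF, hγ⟩

variable {U u e} in
/-- The language is independent of the base point, up to closure. -/
lemma subwordSet_subset_closure
    (hmin : ∀ x : Y, Dense (Set.range fun γ : Λ => U γ x))
    (hs1 : u 0 = 1) (hd : ∀ n, 1 ≤ e n) (hdmono : Monotone e)
    (hsym : ∀ n, ∀ i < e n, ∃ j < e n, u j = (u i)⁻¹)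
    (hgen : Subgroup.closure {g : Λ | ∃ n, ∃ i < e n, u i = g} = ⊤)
    (a b : Y) (ℓ : ℕ) :
    subwordSet U u e a ℓ ⊆ closure (subwordSet U u e b ℓ) := by
  classical
  rintro v ⟨j, off, hocc⟩
  rw [Metric.mem_closure_iff]
  intro ε hε
  have hv := subword_occ U u e hd hocc
  obtain ⟨δ, hδ, hmod⟩ := unif_family U
    ((Finset.univ : Finset (Fin ℓ)).image fun m => hcoef u e 0 j (off + m.val)) hε
  obtain ⟨γ, hγ⟩ : ∃ γ : Λ, dist (U γ b) a < δ := by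
    obtain ⟨x, ⟨γ, rfl⟩, hx⟩ := (hmin b).exists_mem_open Metric.isOpen_ball
      ⟨a, Metric.mem_ball_self hδ⟩
    exact ⟨γ, Metric.mem_ball.mp hx⟩
  obtain ⟨k, hk⟩ := isProd_all u e hs1 hd hdmono hsym hgen (j+1) γ
  obtain ⟨rq, hrq, hcq⟩ := isProd_exists_hcoef u e hd (j+1) k γ hk
  refine ⟨fun m : Fin ℓ => U (hcoef u e 0 j (off + m.val)) (U γ b), ⟨j + 1 + k,
    rq * Lam e 0 j + off, fun m => ?_⟩, ?_⟩
  · have hb := getElem?_block U u e hd j k b rq (off + m.val) hrq (hv m).1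
    rw [show rq * Lam e 0 j + off + m.val = rq * Lam e 0 j + (off + m.val) from Nat.add_assoc _ _ _,
      hb, hcq]
  · rw [dist_pi_lt_iff hε]
    intro m
    rw [(hv m).2]
    exact hmod _ (Finset.mem_image_of_mem _ (Finset.mem_univ m)) _ _
      (by rwa [dist_comm])

variable {U u e} in
lemma lang_indep (hmin : ∀ x : Y, Dense (Set.range fun γ : Λ => U γ x))
    (hs1 : u 0 = 1) (hd : ∀ n, 1 ≤ e n) (hdmono : Monotone e)
    (hsym : ∀ n, ∀ i < e n, ∃ j < e n, u j = (u i)⁻¹)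
    (hgen : Subgroup.closure {g : Λ | ∃ n, ∃ i < e n, u i = g} = ⊤)
    (a b : Y) (ℓ : ℕ) : lang U u e a ℓ = lang U u e b ℓ := by
  apply le_antisymm
  · exact closure_minimal (subwordSet_subset_closure hmin hs1 hd hdmono hsym hgen a b ℓ)
      isClosed_closure
  · exact closure_minimal (subwordSet_subset_closure hmin hs1 hd hdmono hsym hgen b a ℓ)
      isClosed_closure

variable {U u e} in
lemma iUnion_lang (hmin : ∀ x : Y, Dense (Set.range fun γ : Λ => U γ x))
    (hs1 : u 0 = 1) (hd : ∀ n, 1 ≤ e n) (hdmono : Monotone e)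
    (hsym : ∀ n, ∀ i < e n, ∃ j < e n, u j = (u i)⁻¹)
    (hgen : Subgroup.closure {g : Λ | ∃ n, ∃ i < e n, u i = g} = ⊤)
    (b : Y) (ℓ : ℕ) : (⋃ a : Y, lang U u e a ℓ) = lang U u e b ℓ := by
  apply Set.Subset.antisymm
  · exact Set.iUnion_subset fun a =>
      (lang_indep hmin hs1 hd hdmono hsym hgen a b ℓ).le
  · exact Set.subset_iUnion (fun a : Y => lang U u e a ℓ) b


def Xtau' {Y' : Type*} [TopologicalSpace Y'] {Γ' : Type*} [Group Γ']
    (T : Γ' →* (Y' ≃ₜ Y')) (s : ℕ → Γ') (d : ℕ → ℕ) : Set (ℤ → Y') :=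
  {y | ∀ n : ℕ, (fun m : Fin (2 * n + 1) => y ((m.val : ℤ) - (n : ℤ))) ∈
    ⋃ a : Y', lang T s d a (2 * n + 1)}

/-- restriction of a word to a subword -/
def restr {Y' : Type*} (ℓ ℓ' off : ℕ) (h : off + ℓ ≤ ℓ') (v : Fin ℓ' → Y') : Fin ℓ → Y' :=
  fun m => v ⟨off + m.val, by omega⟩

lemma continuous_restr {Y' : Type*} [TopologicalSpace Y'] (ℓ ℓ' off : ℕ) (h : off + ℓ ≤ ℓ') :
    Continuous (restr (Y' := Y') ℓ ℓ' off h) :=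
  continuous_pi fun _ => continuous_apply _

lemma restr_subwordSet (a : Y) (ℓ ℓ' off : ℕ) (h : off + ℓ ≤ ℓ') (v : Fin ℓ' → Y)
    (hv : v ∈ subwordSet U u e a ℓ') : restr ℓ ℓ' off h v ∈ subwordSet U u e a ℓ := by
  obtain ⟨j, off0, hocc⟩ := hv
  refine ⟨j, off0 + off, fun m => ?_⟩
  rw [Nat.add_assoc]
  exact hocc ⟨off + m.val, by omega⟩

lemma restr_lang (a : Y) (ℓ ℓ' off : ℕ) (h : off + ℓ ≤ ℓ') (v : Fin ℓ' → Y)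
    (hv : v ∈ lang U u e a ℓ') : restr ℓ ℓ' off h v ∈ lang U u e a ℓ := by
  have : restr ℓ ℓ' off h '' (closure (subwordSet U u e a ℓ')) ⊆
      closure (restr ℓ ℓ' off h '' subwordSet U u e a ℓ') :=
    image_closure_subset_closure_image (continuous_restr ℓ ℓ' off h)
  have h2 := this (Set.mem_image_of_mem _ hv)
  refine closure_mono ?_ h2
  rintro x ⟨w, hw, rfl⟩
  exact restr_subwordSet U u e a ℓ ℓ' off h w hw

/-- the window of a sequence -/
def wnd {Y' : Type*} (y : ℤ → Y') (n : ℕ) : Fin (2 * n + 1) → Y' :=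
  fun m => y ((m.val : ℤ) - (n : ℤ))

lemma continuous_wnd {Y' : Type*} [TopologicalSpace Y'] (n : ℕ) :
    Continuous (fun y : ℤ → Y' => wnd y n) :=
  continuous_pi fun _ => continuous_apply _

variable {U u e} in
lemma mem_Xtau_iff (hmin : ∀ x : Y, Dense (Set.range fun γ : Λ => U γ x))
    (hs1 : u 0 = 1) (hd : ∀ n, 1 ≤ e n) (hdmono : Monotone e)
    (hsym : ∀ n, ∀ i < e n, ∃ j < e n, u j = (u i)⁻¹)
    (hgen : Subgroup.closure {g : Λ | ∃ n, ∃ i < e n, u i = g} = ⊤)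
    (b : Y) (y : ℤ → Y) :
    y ∈ Xtau' U u e ↔ ∀ n : ℕ, wnd y n ∈ lang U u e b (2 * n + 1) := by
  unfold Xtau' wnd
  simp only [Set.mem_setOf_eq]
  constructor
  · intro h n
    have := h n
    rwa [iUnion_lang hmin hs1 hd hdmono hsym hgen b] at this
  · intro h n
    rw [iUnion_lang hmin hs1 hd hdmono hsym hgen b]
    exact h n

variable {U u e} in
lemma isClosed_Xtau (hmin : ∀ x : Y, Dense (Set.range fun γ : Λ => U γ x))
    (hs1 : u 0 = 1) (hd : ∀ n, 1 ≤ e n) (hdmono : Monotone e)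
    (hsym : ∀ n, ∀ i < e n, ∃ j < e n, u j = (u i)⁻¹)
    (hgen : Subgroup.closure {g : Λ | ∃ n, ∃ i < e n, u i = g} = ⊤) (b : Y) :
    IsClosed (Xtau' U u e) := by
  have : Xtau' U u e = ⋂ n : ℕ, (fun y : ℤ → Y => wnd y n) ⁻¹' lang U u e b (2 * n + 1) := by
    ext y
    simp only [Set.mem_iInter, Set.mem_preimage]
    exact mem_Xtau_iff hmin hs1 hd hdmono hsym hgen b y
  rw [this]
  exact isClosed_iInter fun n =>
    IsClosed.preimage (continuous_wnd n) isClosed_closure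

variable {U u e} in
lemma shift_mem_Xtau (y : ℤ → Y) (hy : y ∈ Xtau' U u e) (k : ℤ) :
    (fun m => y (m + k)) ∈ Xtau' U u e := by
  intro n
  have hN := hy (n + k.natAbs)
  set N := n + k.natAbs with hNdef
  obtain ⟨a, ha⟩ := Set.mem_iUnion.mp hN
  apply Set.mem_iUnion.mpr ⟨a, ?_⟩
  have hb : (k + |k|).toNat + (2 * n + 1) ≤ 2 * N + 1 := by
    rcases abs_cases k with ⟨h1, h2⟩ | ⟨h1, h2⟩ <;>
      simp only [hNdef] <;> omega
  have : (fun m : Fin (2 * n + 1) => y ((m.val : ℤ) - (n : ℤ) + k)) =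
      restr (2 * n + 1) (2 * N + 1) ((k + |k|).toNat) hb
        (fun m : Fin (2 * N + 1) => y ((m.val : ℤ) - (N : ℤ))) := by
    funext m
    unfold restr
    congr 1
    push_cast [hNdef]
    rcases abs_cases k with ⟨h1, h2⟩ | ⟨h1, h2⟩ <;> omega
  rw [this]
  exact restr_lang U u e a _ _ _ hb _ ha

variable {U u e} in
lemma Xtau_nonempty (hmin : ∀ x : Y, Dense (Set.range fun γ : Λ => U γ x))
    (hs1 : u 0 = 1) (hd : ∀ n, 2 ≤ e n) (hdmono : Monotone e)
    (hsym : ∀ n, ∀ i < e n, ∃ j < e n, u j = (u i)⁻¹)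
    (hgen : Subgroup.closure {g : Λ | ∃ n, ∃ i < e n, u i = g} = ⊤)
    (b : Y) : (Xtau' U u e).Nonempty := by
  have hd1 : ∀ n, 1 ≤ e n := fun n => le_trans one_le_two (hd n)
  set C : ℕ → Set (ℤ → Y) :=
    fun n => (fun y : ℤ → Y => wnd y n) ⁻¹' lang U u e b (2 * n + 1) with hC
  have hCclosed : ∀ n, IsClosed (C n) := fun n =>
    IsClosed.preimage (continuous_wnd n) isClosed_closure
  have hCanti : ∀ n, C (n + 1) ⊆ C n := by
    intro n y hy
    simp only [hC, Set.mem_preimage] at hy ⊢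
    have hb : 1 + (2 * n + 1) ≤ 2 * (n + 1) + 1 := by omega
    have : wnd y n = restr (2 * n + 1) (2 * (n + 1) + 1) 1 hb (wnd y (n + 1)) := by
      funext m
      unfold wnd restr
      congr 1
      push_cast
      omega
    rw [this]
    exact restr_lang U u e b _ _ _ hb _ hy
  have hCne : ∀ n, (C n).Nonempty := by
    intro n
    have hlen : 2 * n + 1 ≤ Lam e 0 (2 * n + 1) := by
      have := Lam_lower e hd 0 (2 * n + 1)
      omega
    refine ⟨fun z : ℤ => U (hcoef u e 0 (2 * n + 1) (z + n).toNat) b, ?_⟩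
    simp only [hC, Set.mem_preimage]
    apply subset_closure
    have hmem := mem_subwordSet_of U u e hd1 b (2 * n + 1) (2 * n + 1) 0 (by omega)
    have : wnd (fun z : ℤ => U (hcoef u e 0 (2 * n + 1) (z + n).toNat) b) n =
        fun m : Fin (2 * n + 1) => U (hcoef u e 0 (2 * n + 1) (0 + m.val)) b := by
      funext m
      show U (hcoef u e 0 (2 * n + 1) (((m.val : ℤ) - (n : ℤ) + n).toNat)) b = _
      have harg : ((m.val : ℤ) - (n : ℤ) + n).toNat = 0 + m.val := by omega
      rw [harg]
    rw [this]
    exact hmem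
  have hint := IsCompact.nonempty_iInter_of_sequence_nonempty_isCompact_isClosed
    C hCanti hCne ((hCclosed 0).isCompact) hCclosed
  obtain ⟨y, hy⟩ := hint
  refine ⟨y, ?_⟩
  rw [mem_Xtau_iff hmin hs1 hd1 hdmono hsym hgen b]
  intro n
  exact Set.mem_iInter.mp hy n


variable {U u e} in
lemma Xtau_approx [Nonempty Y] (hmin : ∀ x : Y, Dense (Set.range fun γ : Λ => U γ x))
    (hs1 : u 0 = 1) (hd2 : ∀ n, 2 ≤ e n) (hdmono : Monotone e)
    (hsym : ∀ n, ∀ i < e n, ∃ j < e n, u j = (u i)⁻¹)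
    (hgen : Subgroup.closure {g : Λ | ∃ n, ∃ i < e n, u i = g} = ⊤)
    (y w : ℤ → Y) (hy : y ∈ Xtau' U u e) (hw : w ∈ Xtau' U u e)
    (n : ℕ) {ε : ℝ} (hε : 0 < ε) :
    ∃ k : ℤ, ∀ m : ℤ, |m| ≤ (n : ℤ) → dist (y (m + k)) (w m) < ε := by
  classical
  have hd1 : ∀ n, 1 ≤ e n := fun n => le_trans one_le_two (hd2 n)
  have hε3 : 0 < ε / 3 := by positivity
  -- step 1: approximate w's window by a genuine subword
  obtain ⟨a, ha⟩ := Set.mem_iUnion.mp (hw n)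
  obtain ⟨v, hvmem, hvdist⟩ := Metric.mem_closure_iff.mp ha (ε / 3) hε3
  have hvd : ∀ m : Fin (2 * n + 1),
      dist (w ((m.val : ℤ) - (n : ℤ))) (v m) < ε / 3 :=
    fun m => (dist_pi_lt_iff hε3).mp hvdist m
  obtain ⟨j, off, hocc⟩ := hvmem
  have hv := subword_occ U u e hd1 hocc
  -- step 2: modulus of continuity for the occurring group elements
  obtain ⟨δ, hδ, hmod⟩ := unif_family U
    ((Finset.univ : Finset (Fin (2 * n + 1))).image fun m => hcoef u e 0 j (off + m.val)) hε3
  -- step 3: uniform minimality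
  obtain ⟨F, hF⟩ := unif_min U hmin a hδ
  obtain ⟨k0, hk0⟩ := isProd_finset u e hs1 hd1 hdmono hsym hgen (j + 1) F
  -- notation
  set Λj := Lam e 0 j with hΛj
  set Λp := Lam e 0 (j + 1 + k0) with hΛp
  have hΛpfact : Λp = Λj * Lam e (j + 1) k0 := by
    have h := Lam_add e 0 j k0
    rwa [show 0 + j + 1 = j + 1 by omega] at h
  have hΛppos : 0 < Λp := Lam_pos e hd1 0 _
  have hΛjpos : 0 < Λj := Lam_pos e hd1 0 _
  set N := Λp + n with hN
  -- step 4: approximate y's big window by a genuine subword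
  obtain ⟨a', ha'⟩ := Set.mem_iUnion.mp (hy N)
  obtain ⟨u', humem, hudist⟩ := Metric.mem_closure_iff.mp ha' (ε / 3) hε3
  have hud : ∀ m : Fin (2 * N + 1),
      dist (y ((m.val : ℤ) - (N : ℤ))) (u' m) < ε / 3 :=
    fun m => (dist_pi_lt_iff hε3).mp hudist m
  obtain ⟨j', off', hocc'⟩ := humem
  have hu := subword_occ U u e hd1 hocc'
  -- step 5: j' is at least j + 1 + k0 + 1
  have hbig : off' + 2 * N < Lam e 0 j' := by
    have := (hu ⟨2 * N, by omega⟩).1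
    simpa using this
  have hj' : j + 1 + k0 + 1 ≤ j' := by
    by_contra hcon
    have hle : Lam e 0 j' ≤ Λp := Lam_mono e hd1 0 (by omega)
    omega
  obtain ⟨k', rfl⟩ : ∃ k', j' = j + 1 + k0 + 1 + k' := ⟨j' - (j + 1 + k0 + 1), by omega⟩
  have hΛfact : Lam e 0 (j + 1 + k0 + 1 + k') = Λp * Lam e (j + 1 + k0 + 1) k' := by
    have h := Lam_add e 0 (j + 1 + k0) k'
    rwa [show 0 + (j + 1 + k0) + 1 = j + 1 + k0 + 1 by omega] at h
  -- step 6: select the level-p block inside y's window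
  have hqkey : ∀ q1 : ℕ, q1 * Λp ≤ off' + Λp → q1 < Lam e (j + 1 + k0 + 1) k' := by
    intro q1 h2
    by_contra hcon
    push_neg at hcon
    have h3 : Lam e (j + 1 + k0 + 1) k' * Λp ≤ q1 * Λp := Nat.mul_le_mul_right _ hcon
    have h4 : Λp * Lam e (j + 1 + k0 + 1) k' = Lam e (j + 1 + k0 + 1) k' * Λp := mul_comm _ _
    rw [hΛfact, h4] at hbig
    omega
  obtain ⟨B, hBa, hBb, hBblock⟩ : ∃ B : ℕ, off' < B ∧ B ≤ off' + Λp ∧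
      ∀ r : ℕ, r < Λp → (tauComp U u e 0 (j + 1 + k0 + 1 + k') a')[B + r]? =
        some (U (hcoef u e 0 (j + 1 + k0) r)
          (U (hcoef u e (j + 1 + k0 + 1) k' (off' / Λp + 1)) a')) := by
    refine ⟨(off' / Λp + 1) * Λp, ?_, ?_, ?_⟩
    · calc off' = Λp * (off' / Λp) + off' % Λp := (Nat.div_add_mod off' Λp).symm
      _ < Λp * (off' / Λp) + Λp := by
          have := Nat.mod_lt off' hΛppos
          omega
      _ = (off' / Λp + 1) * Λp := by ring
    · have h5 : off' / Λp * Λp ≤ off' := Nat.div_mul_le_self off' Λp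
      calc (off' / Λp + 1) * Λp = off' / Λp * Λp + Λp := by ring
      _ ≤ off' + Λp := by omega
    · intro r hr
      exact getElem?_block U u e hd1 (j + 1 + k0) k' a' (off' / Λp + 1) r
        (hqkey _ (by
          have h5 : off' / Λp * Λp ≤ off' := Nat.div_mul_le_self off' Λp
          calc (off' / Λp + 1) * Λp = off' / Λp * Λp + Λp := by ring
          _ ≤ off' + Λp := by omega)) hr
  set c := U (hcoef u e (j + 1 + k0 + 1) k' (off' / Λp + 1)) a' with hc
  -- step 7: pick γ ∈ F bringing c close to a
  obtain ⟨γ, hγF, hγ⟩ := hF c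
  obtain ⟨rγ, hrγ, hcγ⟩ := isProd_exists_hcoef u e hd1 (j + 1) k0 γ (hk0 γ hγF)
  -- step 8: index bounds
  have hidx : ∀ mv : ℕ, mv < 2 * n + 1 → rγ * Λj + (off + mv) < Λp := by
    intro mv hmv
    have hoffm := (hv ⟨mv, hmv⟩).1
    calc rγ * Λj + (off + mv) < rγ * Λj + Λj := by
          simp only at hoffm
          omega
    _ = (rγ + 1) * Λj := by ring
    _ ≤ Lam e (j + 1) k0 * Λj := Nat.mul_le_mul_right _ hrγ
    _ = Λp := by rw [hΛpfact, mul_comm]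
  -- step 9: the letters of y's subword at our positions
  have hblock2 : ∀ mv : ℕ, (hmv : mv < 2 * n + 1) →
      U (hcoef u e 0 (j + 1 + k0) (rγ * Λj + (off + mv))) c =
        U (hcoef u e 0 j (off + mv)) (U γ c) := by
    intro mv hmv
    have h1 := getElem?_block U u e hd1 j k0 c rγ (off + mv) hrγ (hv ⟨mv, hmv⟩).1
    have h2 := getElem?_tauComp U u e hd1 0 (j + 1 + k0) c (rγ * Λj + (off + mv))
    rw [if_pos (by rw [← hΛp]; exact hidx mv hmv)] at h2
    rw [h2, hcγ] at h1
    exact Option.some.inj h1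
  have houter : ∀ mv : ℕ, (hmv : mv < 2 * n + 1) →
      (tauComp U u e 0 (j + 1 + k0 + 1 + k') a')[B + (rγ * Λj + (off + mv))]? =
        some (U (hcoef u e 0 j (off + mv)) (U γ c)) := by
    intro mv hmv
    rw [hBblock _ (hidx mv hmv)]
    rw [hblock2 mv hmv]
  -- step 10: identify with coordinates of u'
  have hpos : ∀ mv : ℕ, mv < 2 * n + 1 →
      B + (rγ * Λj + (off + mv)) - off' < 2 * N + 1 := by
    intro mv hmv
    have := hidx mv hmv
    omega
  have hval : ∀ mv : ℕ, (hmv : mv < 2 * n + 1) →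
      u' ⟨B + (rγ * Λj + (off + mv)) - off', hpos mv hmv⟩ =
        U (hcoef u e 0 j (off + mv)) (U γ c) := by
    intro mv hmv
    have h3 := hocc' ⟨B + (rγ * Λj + (off + mv)) - off', hpos mv hmv⟩
    rw [show off' + (B + (rγ * Λj + (off + mv)) - off') =
      B + (rγ * Λj + (off + mv)) from by omega] at h3
    rw [houter mv hmv] at h3
    exact (Option.some.inj h3).symm
  -- step 11: assemble the estimate
  refine ⟨((B + rγ * Λj + off : ℕ) : ℤ) - (off' : ℤ) - (N : ℤ) + (n : ℤ), ?_⟩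
  intro m' hm'
  obtain ⟨hm'l, hm'r⟩ := abs_le.mp hm'
  obtain ⟨mv, hmv1, hmv2⟩ : ∃ mv : ℕ, mv < 2 * n + 1 ∧ (mv : ℤ) = m' + n :=
    ⟨(m' + n).toNat, by omega, by omega⟩
  have harg : ((B + (rγ * Λj + (off + mv)) - off' : ℕ) : ℤ) - (N : ℤ) =
      m' + (((B + rγ * Λj + off : ℕ) : ℤ) - (off' : ℤ) - (N : ℤ) + (n : ℤ)) := by
    have hle : off' ≤ B + (rγ * Λj + (off + mv)) := by omega
    push_cast [Nat.cast_sub hle]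
    omega
  have e1 := hud ⟨B + (rγ * Λj + (off + mv)) - off', hpos mv hmv1⟩
  simp only at e1
  rw [harg] at e1
  have e2 : dist (u' ⟨B + (rγ * Λj + (off + mv)) - off', hpos mv hmv1⟩)
      (v ⟨mv, hmv1⟩) < ε / 3 := by
    rw [hval mv hmv1, (hv ⟨mv, hmv1⟩).2]
    exact hmod _ (Finset.mem_image_of_mem _ (Finset.mem_univ ⟨mv, hmv1⟩)) _ _ hγ
  have e3 : dist (v ⟨mv, hmv1⟩) (w m') < ε / 3 := by
    have h6 := hvd ⟨mv, hmv1⟩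
    simp only at h6
    rw [show ((mv : ℤ) - (n : ℤ)) = m' from by omega] at h6
    rw [dist_comm] at h6
    exact h6
  calc dist (y (m' + (((B + rγ * Λj + off : ℕ) : ℤ) - (off' : ℤ) - (N : ℤ) + (n : ℤ)))) (w m')
      ≤ dist (y (m' + (((B + rγ * Λj + off : ℕ) : ℤ) - (off' : ℤ) - (N : ℤ) + (n : ℤ))))
        (u' ⟨B + (rγ * Λj + (off + mv)) - off', hpos mv hmv1⟩) +
        dist (u' ⟨B + (rγ * Λj + (off + mv)) - off', hpos mv hmv1⟩) (v ⟨mv, hmv1⟩) +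
        dist (v ⟨mv, hmv1⟩) (w m') := dist_triangle4 _ _ _ _
  _ < ε / 3 + ε / 3 + ε / 3 := add_lt_add (add_lt_add e1 e2) e3
  _ = ε := by ring


variable {U u e} in
lemma Xtau_aperiodic (hfree : ∀ (γ : Λ) (x : Y), U γ x = x → γ = 1)
    (hs1 : u 0 = 1) (hd2 : ∀ n, 2 ≤ e n) (hdmono : Monotone e)
    (hsym : ∀ n, ∀ i < e n, ∃ j < e n, u j = (u i)⁻¹)
    (hgen : Subgroup.closure {g : Λ | ∃ n, ∃ i < e n, u i = g} = ⊤)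
    (hinf : Infinite Λ)
    (y : ℤ → Y) (hy : y ∈ Xtau' U u e) (k : ℤ) (hk : (fun m => y (m + k)) = y) :
    k = 0 := by
  classical
  by_contra hk0
  have hd1 : ∀ n, 1 ≤ e n := fun n => le_trans one_le_two (hd2 n)
  set κ := k.natAbs with hκ
  have hκpos : 0 < κ := Int.natAbs_pos.mpr hk0
  -- periodicity with natural period κ
  have hper1 : ∀ c : ℤ, y (c + κ) = y c := by
    intro c
    rcases Int.natAbs_eq k with he | he
    · have h := congrFun hk c
      rw [show ((κ : ℕ) : ℤ) = k from by rw [hκ, ← he]]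
      exact h
    · have h := congrFun hk (c + κ)
      rw [show c + (κ : ℤ) + k = c from by rw [← hκ] at he; omega] at h
      exact h.symm
  have hmodred : ∀ r : ℕ, ∀ b : ℤ, y (b + (r : ℤ)) = y (b + ((r % κ : ℕ) : ℤ)) := by
    intro r
    induction r using Nat.strong_induction_on with
    | _ r ih =>
      intro b
      rcases lt_or_ge r κ with h | h
      · rw [Nat.mod_eq_of_lt h]
      · have h1 : y (b + (r : ℤ)) = y (b + ((r - κ : ℕ) : ℤ)) := by
          have h2 := hper1 (b + (r - κ : ℕ))
          rw [show b + ((r - κ : ℕ) : ℤ) + (κ : ℤ) = b + r from by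
            push_cast [Nat.cast_sub h]; ring] at h2
          exact h2
        rw [h1, ih (r - κ) (by omega) b, show (r - κ) % κ = r % κ from by
          conv_rhs => rw [show r = (r - κ) + κ from by omega]
          rw [Nat.add_mod_right]]
  -- κ + 1 distinct group elements realized at a common level p
  set ι := Infinite.natEmbedding Λ with hι
  obtain ⟨K, hK⟩ := isProd_finset u e hs1 hd1 hdmono hsym hgen 0
    ((Finset.range (κ + 1)).image ι)
  set p := max K κ with hp
  set Λp := Lam e 0 p with hΛp
  have hΛppos : 0 < Λp := Lam_pos e hd1 0 p
  have hΛpκ : κ < Λp := by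
    have h1 : κ ≤ p := le_max_right K κ
    have h2 := Lam_lower e hd2 0 p
    omega
  -- the phase sets
  set S : Fin Λp → Set (Fin (2 * Λp + 1) → Y) := fun ρ =>
    ⋂ r : Fin Λp, {v | v ⟨ρ.val + r.val, by omega⟩ =
      U (hcoef u e 0 p r.val) (v ⟨ρ.val, by omega⟩)} with hS
  have hSclosed : ∀ ρ, IsClosed (S ρ) := fun ρ =>
    isClosed_iInter fun r => isClosed_eq (continuous_apply _)
      (Continuous.comp (U _).continuous (continuous_apply _))
  have hsub : ∀ a : Y, subwordSet U u e a (2 * Λp + 1) ⊆ ⋃ ρ : Fin Λp, S ρ := by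
    intro a v hv
    obtain ⟨j', off, hocc⟩ := hv
    have hvv := subword_occ U u e hd1 hocc
    have hbig : off + 2 * Λp < Lam e 0 j' := by
      have h1 := (hvv ⟨2 * Λp, by omega⟩).1
      simpa using h1
    have hj' : p + 1 ≤ j' := by
      by_contra hcon
      have h1 : Lam e 0 j' ≤ Λp := Lam_mono e hd1 0 (by omega)
      omega
    obtain ⟨k', rfl⟩ : ∃ k', j' = p + 1 + k' := ⟨j' - (p + 1), by omega⟩
    have hΛfact : Lam e 0 (p + 1 + k') = Λp * Lam e (p + 1) k' := by
      have h := Lam_add e 0 p k'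
      rwa [show 0 + p + 1 = p + 1 by omega] at h
    obtain ⟨ρ, q1, hρlt, hq1⟩ : ∃ ρ q1 : ℕ, ρ < Λp ∧ off + ρ = q1 * Λp := by
      have hdm := Nat.div_add_mod off Λp
      have hcomm : Λp * (off / Λp) = (off / Λp) * Λp := mul_comm _ _
      rcases Nat.eq_zero_or_pos (off % Λp) with h0 | h0
      · exact ⟨0, off / Λp, hΛppos, by omega⟩
      · refine ⟨Λp - off % Λp, off / Λp + 1, by omega, ?_⟩
        have hexp : (off / Λp + 1) * Λp = (off / Λp) * Λp + Λp := by ring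
        have hmlt := Nat.mod_lt off hΛppos
        omega
    have hq1lt : q1 < Lam e (p + 1) k' := by
      by_contra hcon
      push_neg at hcon
      have h3 : Lam e (p + 1) k' * Λp ≤ q1 * Λp := Nat.mul_le_mul_right _ hcon
      have h4 : Λp * Lam e (p + 1) k' = Lam e (p + 1) k' * Λp := mul_comm _ _
      rw [hΛfact, h4] at hbig
      omega
    have hlet : ∀ r : ℕ, (hr : r < Λp) → v ⟨ρ + r, by omega⟩ =
        U (hcoef u e 0 p r) (U (hcoef u e (p + 1) k' q1) a) := by
      intro r hr
      have h5 := hocc ⟨ρ + r, by omega⟩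
      rw [show off + (ρ + r) = q1 * Λp + r from by omega] at h5
      rw [getElem?_block U u e hd1 p k' a q1 r hq1lt hr] at h5
      exact (Option.some.inj h5).symm
    have hbase : ∀ (h : ρ < 2 * Λp + 1),
        v ⟨ρ, h⟩ = U (hcoef u e (p + 1) k' q1) a := by
      intro h
      have h6 := hlet 0 hΛppos
      rw [hcoef_zero u e hs1 hd1 0 p, map_one] at h6
      rw [show (⟨ρ, h⟩ : Fin (2 * Λp + 1)) = ⟨ρ + 0, by omega⟩ from
        Fin.ext ((Nat.add_zero ρ).symm)]
      exact h6
    refine Set.mem_iUnion.mpr ⟨⟨ρ, hρlt⟩, Set.mem_iInter.mpr fun r => ?_⟩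
    show v ⟨ρ + r.val, by omega⟩ = U (hcoef u e 0 p r.val) (v ⟨ρ, by omega⟩)
    rw [hlet r.val r.isLt, hbase (by omega)]
  -- apply to the window of y
  obtain ⟨aa, haa⟩ := Set.mem_iUnion.mp (hy Λp)
  have hclosedU : IsClosed (⋃ ρ : Fin Λp, S ρ) := isClosed_iUnion_of_finite hSclosed
  have hmemU : (fun m : Fin (2 * Λp + 1) => y ((m.val : ℤ) - (Λp : ℤ))) ∈
      ⋃ ρ : Fin Λp, S ρ :=
    closure_minimal (hsub aa) hclosedU haa
  obtain ⟨ρ, hρ⟩ := Set.mem_iUnion.mp hmemU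
  have hrel : ∀ r : Fin Λp,
      y (((ρ.val + r.val : ℕ) : ℤ) - (Λp : ℤ)) =
        U (hcoef u e 0 p r.val) (y (((ρ.val : ℕ) : ℤ) - (Λp : ℤ))) := by
    intro r
    have h7 := Set.mem_iInter.mp hρ r
    simpa using h7
  -- equality of coefficients along the period
  have hweq : ∀ r r' : ℕ, r < Λp → r' < Λp → r % κ = r' % κ →
      hcoef u e 0 p r = hcoef u e 0 p r' := by
    intro r r' hr hr' hmodeq
    have h2 := hrel ⟨r, hr⟩
    have h3 := hrel ⟨r', hr'⟩
    have h4 : U (hcoef u e 0 p r) (y (((ρ.val : ℕ) : ℤ) - (Λp : ℤ))) =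
        U (hcoef u e 0 p r') (y (((ρ.val : ℕ) : ℤ) - (Λp : ℤ))) := by
      rw [← h2, ← h3,
        show ((ρ.val + r : ℕ) : ℤ) - (Λp : ℤ) = ((ρ.val : ℤ) - (Λp : ℤ)) + r from by
          push_cast; ring,
        show ((ρ.val + r' : ℕ) : ℤ) - (Λp : ℤ) = ((ρ.val : ℤ) - (Λp : ℤ)) + r' from by
          push_cast; ring,
        hmodred r _, hmodred r' _, hmodeq]
    have h5 : U ((hcoef u e 0 p r')⁻¹ * hcoef u e 0 p r)
        (y (((ρ.val : ℕ) : ℤ) - (Λp : ℤ))) = y (((ρ.val : ℕ) : ℤ) - (Λp : ℤ)) := by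
      rw [T_mul_apply, h4, ← T_mul_apply, inv_mul_cancel, map_one]
      rfl
    have h6 := hfree _ _ h5
    have h8 : hcoef u e 0 p r' = hcoef u e 0 p r := inv_mul_eq_one.mp h6
    exact h8.symm
  -- pigeonhole
  have hsel : ∀ t : ℕ, t < κ + 1 → ∃ r, r < Λp ∧ hcoef u e 0 p r = ι t := by
    intro t ht
    have h7 : IsProd u e 0 K (ι t) :=
      hK (ι t) (Finset.mem_image_of_mem ι (Finset.mem_range.mpr ht))
    have h8 : IsProd u e 0 p (ι t) :=
      isProd_mono_k_le u e hs1 hd1 0 (le_max_left K κ) _ h7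
    exact isProd_exists_hcoef u e hd1 0 p _ h8
  choose rt hrt1 hrt2 using hsel
  have hmap : ∀ t ∈ Finset.range (κ + 1),
      (if h : t < κ + 1 then rt t h % κ else 0) ∈ Finset.range κ := by
    intro t ht
    rw [dif_pos (Finset.mem_range.mp ht)]
    exact Finset.mem_range.mpr (Nat.mod_lt _ hκpos)
  obtain ⟨t1, ht1, t2, ht2, hne, heq⟩ := Finset.exists_ne_map_eq_of_card_lt_of_maps_to
    (by simp : (Finset.range κ).card < (Finset.range (κ + 1)).card) hmap
  rw [Finset.mem_range] at ht1 ht2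
  rw [dif_pos ht1, dif_pos ht2] at heq
  have h9 : ι t1 = ι t2 := by
    rw [← hrt2 t1 ht1, ← hrt2 t2 ht2]
    exact hweq _ _ (hrt1 t1 ht1) (hrt1 t2 ht2) heq
  exact hne (ι.injective h9)


lemma finset_inf_pos {α : Type*} (I : Finset α) (f : α → ℝ) (hf : ∀ i ∈ I, 0 < f i) :
    ∃ ε > (0:ℝ), ∀ i ∈ I, ε ≤ f i := by
  classical
  revert hf
  induction I using Finset.induction_on with
  | empty => exact fun _ => ⟨1, one_pos, by simp⟩
  | insert a I' h ih =>
    intro hf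
    obtain ⟨ε, hε, hle⟩ := ih (fun i hi => hf i (Finset.mem_insert_of_mem hi))
    refine ⟨min ε (f a), lt_min hε (hf a (Finset.mem_insert_self a I')), ?_⟩
    intro i hi
    rcases Finset.mem_insert.mp hi with rfl | hi
    · exact min_le_right _ _
    · exact le_trans (min_le_left _ _) (hle i hi)

variable {U u e} in
lemma Xtau_min_closure [Nonempty Y] (hmin : ∀ x : Y, Dense (Set.range fun γ : Λ => U γ x))
    (hs1 : u 0 = 1) (hd2 : ∀ n, 2 ≤ e n) (hdmono : Monotone e)
    (hsym : ∀ n, ∀ i < e n, ∃ j < e n, u j = (u i)⁻¹)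
    (hgen : Subgroup.closure {g : Λ | ∃ n, ∃ i < e n, u i = g} = ⊤)
    (y w : ℤ → Y) (hy : y ∈ Xtau' U u e) (hw : w ∈ Xtau' U u e) :
    w ∈ closure (Set.range fun k : ℤ => fun m : ℤ => y (m + k)) := by
  rw [mem_closure_iff]
  intro o ho hwo
  rw [isOpen_pi_iff] at ho
  obtain ⟨I, Uf, hIU, hIsub⟩ := ho w hwo
  have hballs : ∀ i : ℤ, ∃ ε > (0:ℝ), i ∈ I → Metric.ball (w i) ε ⊆ Uf i := by
    intro i
    by_cases hi : i ∈ I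
    · obtain ⟨ε, hε, hb⟩ := Metric.isOpen_iff.mp (hIU i hi).1 (w i) (hIU i hi).2
      exact ⟨ε, hε, fun _ => hb⟩
    · exact ⟨1, one_pos, fun h => absurd h hi⟩
  choose εf hεf1 hεf2 using hballs
  obtain ⟨ε, hεpos, hεle⟩ : ∃ ε > (0:ℝ), ∀ i ∈ I, ε ≤ εf i :=
    finset_inf_pos I εf (fun i _ => hεf1 i)
  set n := I.sup (fun i => i.natAbs) with hn
  obtain ⟨k, hkap⟩ := Xtau_approx hmin hs1 hd2 hdmono hsym hgen y w hy hw n hεpos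
  refine ⟨fun m : ℤ => y (m + k), hIsub ?_, Set.mem_range_self k⟩
  intro i hi
  apply hεf2 i hi
  rw [Metric.mem_ball]
  have h1 : |i| ≤ (n : ℤ) := by
    have h2 : i.natAbs ≤ n := Finset.le_sup hi
    rw [abs_le]
    omega
  calc dist (y (i + k)) (w i) < ε := hkap i h1
  _ ≤ εf i := hεle i hi

variable {U u e} in
lemma Xtau_perfect [Nonempty Y] (hmin : ∀ x : Y, Dense (Set.range fun γ : Λ => U γ x))
    (hs1 : u 0 = 1) (hd2 : ∀ n, 2 ≤ e n) (hdmono : Monotone e)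
    (hsym : ∀ n, ∀ i < e n, ∃ j < e n, u j = (u i)⁻¹)
    (hgen : Subgroup.closure {g : Λ | ∃ n, ∃ i < e n, u i = g} = ⊤)
    (haper : ∀ y ∈ Xtau' U u e, ∀ k : ℤ, (fun m => y (m + k)) = y → k = 0) :
    Perfect (Xtau' U u e) := by
  have hd1 : ∀ n, 1 ≤ e n := fun n => le_trans one_le_two (hd2 n)
  have hcl : IsClosed (Xtau' U u e) :=
    isClosed_Xtau hmin hs1 hd1 hdmono hsym hgen (Classical.arbitrary Y)
  refine ⟨hcl, ?_⟩
  intro y hy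
  rw [accPt_iff_nhds]
  intro V hV
  obtain ⟨o, hoV, ho, hyo⟩ := mem_nhds_iff.mp hV
  have hcov : Xtau' U u e ⊆ ⋃ k : ℤ, (fun w' : ℤ → Y => fun m => w' (m + k)) ⁻¹' o := by
    intro w' hw'
    have h1 := Xtau_min_closure hmin hs1 hd2 hdmono hsym hgen w' y hw' hy
    obtain ⟨z, hzo, hzr⟩ := mem_closure_iff.mp h1 o ho hyo
    obtain ⟨k, rfl⟩ := hzr
    exact Set.mem_iUnion.mpr ⟨k, hzo⟩
  obtain ⟨t, ht⟩ := (hcl.isCompact).elim_finite_subcover _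
    (fun k : ℤ => ho.preimage (continuous_pi fun m => continuous_apply (m + k))) hcov
  set K := t.sup (fun k => k.natAbs) with hK
  have hwK : (fun m : ℤ => y (m + ((K : ℤ) + 1))) ∈ Xtau' U u e :=
    shift_mem_Xtau _ hy _
  have h2 := ht hwK
  rw [Set.mem_iUnion₂] at h2
  obtain ⟨k, hkt, hko⟩ := h2
  have h3 : (fun m : ℤ => y (m + (k + ((K : ℤ) + 1)))) ∈ o := by
    have h4 : (fun m : ℤ => (fun m' : ℤ => y (m' + ((K : ℤ) + 1))) (m + k)) =
        fun m : ℤ => y (m + (k + ((K : ℤ) + 1))) := by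
      funext m
      congr 1
      ring
    rw [← h4]
    exact hko
  have hkne : k + ((K : ℤ) + 1) ≠ 0 := by
    have h5 : k.natAbs ≤ K := Finset.le_sup hkt
    omega
  exact ⟨fun m : ℤ => y (m + (k + ((K : ℤ) + 1))), ⟨hoV h3, shift_mem_Xtau _ hy _⟩,
    fun hcon => hkne (haper y hy _ hcon)⟩

end Metric

/-- The extension of the substitution `τ_n` to bi-infinite sequences: the image of
`x = (x_i)_i` is `⋯ τ_n(x_{-1}) . τ_n(x_0) τ_n(x_1) ⋯` with `τ_n(x_0)` starting at index 0;
since all `τ_n`-words have length `d n`, the letter at index `m` is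
`T^{s_{(m mod d n)+1}} (x_{m div d n})`. -/
def tauSeq (T : Γ →* (X ≃ₜ X)) (s : ℕ → Γ) (d : ℕ → ℕ) (n : ℕ) (x : ℤ → X) : ℤ → X :=
  fun m => T (s (m % (d n : ℤ)).toNat) (x (m / (d n : ℤ)))

/-- The sequence `τ_0 ∘ τ_1 ∘ ⋯ ∘ τ_n (x)` for a bi-infinite sequence `x`. -/
def tauSeqComp (T : Γ →* (X ≃ₜ X)) (s : ℕ → Γ) (d : ℕ → ℕ) : ℕ → (ℤ → X) → (ℤ → X)
  | 0, x => tauSeq T s d 0 x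
  | n + 1, x => tauSeqComp T s d n (tauSeq T s d (n + 1) x)

/-- The generalized subshift `X_τ̄`: all bi-infinite sequences `y` such that every window
`y[-n,n]` belongs to the language `L(τ̄) = ⋃_a L(τ̄,a)`. -/
def Xtau (T : Γ →* (X ≃ₜ X)) (s : ℕ → Γ) (d : ℕ → ℕ) : Set (ℤ → X) :=
  {y | ∀ n : ℕ, (fun m : Fin (2 * n + 1) => y ((m.val : ℤ) - (n : ℤ))) ∈
    ⋃ a : X, lang T s d a (2 * n + 1)}



lemma infinite_of_free_minimal {Y : Type*} [TopologicalSpace Y] [T1Space Y]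
    [PerfectSpace Y] [Nonempty Y] {Λ : Type*} [Group Λ] (U : Λ →* (Y ≃ₜ Y))
    (hmin : ∀ x : Y, Dense (Set.range fun γ : Λ => U γ x)) : Infinite Λ := by
  by_contra hinf
  rw [not_infinite_iff_finite] at hinf
  have x0 : Y := Classical.arbitrary Y
  have hfin : (Set.range fun γ : Λ => U γ x0).Finite := Set.finite_range _
  have hclosed : IsClosed (Set.range fun γ : Λ => U γ x0) := hfin.isClosed
  have huniv : (Set.range fun γ : Λ => U γ x0) = Set.univ := by
    rw [← hclosed.closure_eq]
    exact (hmin x0).closure_eq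
  have hYfin : Finite Y := Set.finite_univ_iff.mp (huniv ▸ hfin)
  have hcfin : ({x0}ᶜ : Set Y).Finite := Set.toFinite _
  have hopen : IsOpen ({x0} : Set Y) := by
    have h1 := hcfin.isClosed.isOpen_compl
    simpa using h1
  have hpp : Preperfect (Set.univ : Set Y) := PerfectSpace.univ_preperfect
  rw [preperfect_iff_nhds] at hpp
  obtain ⟨z, hz, hzx⟩ := hpp x0 (Set.mem_univ x0) {x0} (hopen.mem_nhds rfl)
  exact hzx hz.1

/-- The generalized subshift `(X_τ̄, σ)` associated to an aperiodic
minimal Cantor system `(X,T,Γ)` is a minimal aperiodic Cantor `ℤ`-system: `X_τ̄` is a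
nonempty Cantor set (compact, metrizable, totally disconnected, perfect), invariant under
the shift, the shift on it is minimal (every shift-orbit is dense in `X_τ̄`), and the shift
has no periodic points in `X_τ̄`. -/
theorem sadic_subshift_is_minimal_aperiodic_cantor
    {X : Type*} [TopologicalSpace X] [CompactSpace X] [MetrizableSpace X]
    [TotallyDisconnectedSpace X] [PerfectSpace X] [Nonempty X]
    {Γ : Type*} [Group Γ] [Countable Γ]
    (T : Γ →* (X ≃ₜ X))
    (hfree : ∀ (γ : Γ) (x : X), T γ x = x → γ = 1)
    (hmin : ∀ x : X, Dense (Set.range fun γ : Γ => T γ x))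
    (s : ℕ → Γ) (d : ℕ → ℕ)
    (hs1 : s 0 = 1) (hd : ∀ n, 1 ≤ d n) (hd2 : 2 ≤ d 0) (hdmono : Monotone d)
    (hsym : ∀ n, ∀ i < d n, ∃ j < d n, s j = (s i)⁻¹)
    (hgen : Subgroup.closure {g : Γ | ∃ n, ∃ i < d n, s i = g} = ⊤) :
    (Xtau T s d).Nonempty ∧
    CompactSpace ↥(Xtau T s d) ∧ MetrizableSpace ↥(Xtau T s d) ∧
    TotallyDisconnectedSpace ↥(Xtau T s d) ∧ Perfect (Xtau T s d) ∧
    (∀ (k : ℤ) (y : ℤ → X), y ∈ Xtau T s d → (fun m => y (m + k)) ∈ Xtau T s d) ∧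
    (∀ y ∈ Xtau T s d, ∀ w ∈ Xtau T s d,
      w ∈ closure (Set.range fun k : ℤ => fun m : ℤ => y (m + k))) ∧
    (∀ y ∈ Xtau T s d, ∀ k : ℤ, (fun m => y (m + k)) = y → k = 0) := by
  classical
  letI : MetricSpace X := TopologicalSpace.metrizableSpaceMetric X
  have hd2all : ∀ n, 2 ≤ d n := fun n => le_trans hd2 (hdmono (Nat.zero_le n))
  haveI hinf : Infinite Γ := infinite_of_free_minimal T hmin
  have hXeq : Xtau T s d = Xtau' T s d := rfl
  have b0 : X := Classical.arbitrary X
  have hclosed : IsClosed (Xtau T s d) := by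
    rw [hXeq]
    exact isClosed_Xtau hmin hs1 hd hdmono hsym hgen b0
  have haper : ∀ y ∈ Xtau T s d, ∀ k : ℤ, (fun m => y (m + k)) = y → k = 0 := by
    intro y hy k hk
    rw [hXeq] at hy
    exact Xtau_aperiodic hfree hs1 hd2all hdmono hsym hgen hinf y hy k hk
  refine ⟨?_, ?_, ?_, ?_, ?_, ?_, ?_, haper⟩
  · rw [hXeq]
    exact Xtau_nonempty hmin hs1 hd2all hdmono hsym hgen b0
  · exact isCompact_iff_compactSpace.mp hclosed.isCompact
  · infer_instance
  · infer_instance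
  · rw [hXeq]
    refine Xtau_perfect hmin hs1 hd2all hdmono hsym hgen ?_
    rw [← hXeq]
    exact haper
  · intro k y hy
    rw [hXeq] at hy ⊢
    exact shift_mem_Xtau y hy k
  · intro y hy w hw
    rw [hXeq] at hy hw
    exact Xtau_min_closure hmin hs1 hd2all hdmono hsym hgen y w hy hw
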